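/- Let R be a commutative ring, U(v) = v − 2η, Q, h̃ : ℂ → R with Q(v) invertible for all v, and suppose T⁽ᴶ⁾(v) = Q(U⁻¹v)·Q(Uᴶ⁻¹v)·Σ_{k=0}^{J−1} h̃(Uᵏ⁻¹v)^L·Q(Uᵏ⁻¹v)⁻¹·Q(Uᵏv)⁻¹ for all 0 ≤ J ≤ N and all v, and that Q(Uᴺv) = Q(v) and h̃(Uᴺv) = h̃(v) for all v. Then for every 0 ≤ J ≤ N and every v: T⁽ᴶ⁾(Uv) + T⁽ᴺ⁻ᴶ⁾(U^{J+1}v) = Q(Uᴶv)·Q(v)⁻¹·T⁽ᴺ⁾(Uv). -/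

import Mathlib

/-!
Writing `U v = v - 2η`, both sides of the identity, evaluated at `Uv` and `U^{J+1}v`, are windows
of one sequence `g k = h̃(Uᵏv)^L Q(Uᵏv)⁻¹ Q(U^{k+1}v)⁻¹`: `T⁽ᴶ⁾(Uv)` is `Q(v) Q(Uᴶv)` times the sum of
`g` over `[0, J)` and `T⁽ᴺ⁻ᴶ⁾(U^{J+1}v)` is `Q(Uᴶv) Q(Uᴺv)` times the sum over `[J, N)`. Periodicity
`Q(Uᴺv) = Q(v)` makes the prefactors agree, and the two windows add up to the sum over `[0, N)`.
-/

open Finset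

section Fusion

variable {R : Type*} [CommRing R] (η : ℂ) (L : ℕ) (Q : ℂ → Rˣ) (htil : ℂ → R)

/-- The right-hand side of the fusion formula for `T⁽ᴶ⁾(v)`, with `Uᵏv` written `v - 2kη`. -/
noncomputable def fusedTransfer (J : ℕ) (v : ℂ) : R :=
  (Q (v + 2*η) : R) * (Q (v - 2*((J : ℂ) - 1)*η) : R) *
    ∑ k ∈ range J, htil (v - 2*((k : ℂ) - 1)*η) ^ L *
      ((Q (v - 2*((k : ℂ) - 1)*η))⁻¹ : Rˣ) * ((Q (v - 2*(k : ℂ)*η))⁻¹ : Rˣ)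

noncomputable def fusedSummand (v : ℂ) (k : ℕ) : R :=
  htil (v - 2*(k : ℂ)*η) ^ L * ((Q (v - 2*(k : ℂ)*η))⁻¹ : Rˣ) *
    ((Q (v - 2*((k : ℂ) + 1)*η))⁻¹ : Rˣ)

theorem fusedTransfer_sub (J m : ℕ) (v : ℂ) :
    fusedTransfer η L Q htil J (v - 2*((m : ℂ) + 1)*η)
      = (Q (v - 2*(m : ℂ)*η) : R) * (Q (v - 2*((m + J : ℕ) : ℂ)*η) : R) *
          ∑ k ∈ Ico m (m + J), fusedSummand η L Q htil v k := by
  have hfirst : v - 2*((m : ℂ) + 1)*η + 2*η = v - 2*(m : ℂ)*η := by ring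
  have hlast : v - 2*((m : ℂ) + 1)*η - 2*((J : ℂ) - 1)*η = v - 2*((m + J : ℕ) : ℂ)*η := by
    push_cast; ring
  rw [fusedTransfer, hfirst, hlast, sum_Ico_eq_sum_range, Nat.add_sub_cancel_left]
  congr 1
  refine sum_congr rfl fun k _ => ?_
  have hk : v - 2*((m : ℂ) + 1)*η - 2*((k : ℂ) - 1)*η = v - 2*((m + k : ℕ) : ℂ)*η := by
    push_cast; ring
  have hk' : v - 2*((m : ℂ) + 1)*η - 2*(k : ℂ)*η = v - 2*(((m + k : ℕ) : ℂ) + 1)*η := by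
    push_cast; ring
  rw [fusedSummand, hk, hk']

end Fusion

theorem eightVertex_QQ_family_core {R : Type*} [CommRing R] (η : ℂ) (L N : ℕ)
    (Q : ℂ → Rˣ) (htil : ℂ → R) (Tf : ℕ → ℂ → R)
    (hfus : ∀ J : ℕ, J ≤ N → ∀ v : ℂ,
      Tf J v = (Q (v + 2*η) : R) * (Q (v - 2*((J : ℂ) - 1)*η) : R) *
        ∑ k ∈ range J, htil (v - 2*((k : ℂ) - 1)*η) ^ L *
          ((Q (v - 2*((k : ℂ) - 1)*η))⁻¹ : Rˣ) * ((Q (v - 2*(k : ℂ)*η))⁻¹ : Rˣ))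
    (hQper : ∀ v : ℂ, Q (v - 2*(N : ℂ)*η) = Q v) :
    ∀ J : ℕ, J ≤ N → ∀ v : ℂ,
      Tf J (v - 2*η) + Tf (N - J) (v - 2*((J : ℂ) + 1)*η)
        = (Q (v - 2*(J : ℂ)*η) : R) * ((Q v)⁻¹ : Rˣ) * Tf N (v - 2*η) := by
  intro J hJ v
  have hT : ∀ K ≤ N, ∀ w, Tf K w = fusedTransfer η L Q htil K w := hfus
  have hU : v - 2*η = v - 2*(((0 : ℕ) : ℂ) + 1)*η := by simp
  rw [hT J hJ, hT (N - J) (Nat.sub_le N J), hT N le_rfl, hU, fusedTransfer_sub,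
    fusedTransfer_sub, fusedTransfer_sub, Nat.add_sub_cancel' hJ, Nat.zero_add, Nat.zero_add,
    Nat.cast_zero, mul_zero, zero_mul, sub_zero, hQper,
    ← sum_Ico_consecutive _ J.zero_le hJ]
  set g := fusedSummand η L Q htil v
  linear_combination
    -((Q (v - 2*(J : ℂ)*η) : R) * Q v * (∑ k ∈ Ico 0 J, g k + ∑ k ∈ Ico J N, g k)) *
      Units.inv_mul (Q v)
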